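/- Corollary 1 (combined, explicit form): Suppose 0 ≤ q ≤ 1 and q < u < 1. For each N ≥ 1, let R_N be an N×N complex Hermitian positive semidefinite matrix whose largest eigenvalue λ_max(N) satisfies λ_max(N) ≤ a N^u for some a > 0 independent of N, and let v_N ∈ ℂ^N be a vector with |v_N(n)| = 1 for every n. Set Q(N) equal to the (real, nonnegative) quadratic form v_N^H R_N v_N. Then μ_C(N) → +∞ and σ_C(N)² → 0 as N → ∞. -/

import Mathlib

/-!
The line-of-sight term drives everything: `ᾱ_N N² = α_r α_s (A₀ N^{1-q})² / (1 + κ_r) → ∞`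
because `q < 1`, and `μ(N) ≥ κ_r ᾱ_N N²`, so `μ(N) → ∞` and hence `μ_C(N) → ∞`.

For the variance, `R_N ≤ a N^u · I` in the Loewner order gives `Q(N) ≤ a N^{u+1}`, so
`ᾱ_N Q(N) ≤ (a / κ_r) N^{u-1} μ(N)`; since `u < 1` this makes `η = o(μ)`, while `ω ≤ 2μ`.
With `D = 1 + ρ M μ → ∞` we get `σ_C² ∝ (ω η + η + const) / D²` with `ω = O(D)` and
`η = o(D)`, which tends to `0`.
-/

open Filter Real Matrix ComplexOrder

/-- Area of a single IRS reflecting element: `A_N = A₀ N^{-q}`. -/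
noncomputable def irsElemArea (A₀ q : ℝ) (N : ℕ) : ℝ := A₀ * (N : ℝ) ^ (-q)

/-- `ᾱ_N = α_r α_s A_N² / (1 + κ_r)`. -/
noncomputable def alphaBarN (A₀ αr αs κr q : ℝ) (N : ℕ) : ℝ :=
  αr * αs * (irsElemArea A₀ q N) ^ 2 / (1 + κr)

/-- `μ(N) = α_d A_M + κ_r ᾱ_N N² + ᾱ_N Q(N)`. -/
noncomputable def muN (A₀ αd αr αs AM κr q : ℝ) (Q : ℕ → ℝ) (N : ℕ) : ℝ :=
  αd * AM + κr * alphaBarN A₀ αr αs κr q N * (N : ℝ) ^ 2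
    + alphaBarN A₀ αr αs κr q N * Q N

/-- `η(N) = α_d A_M / M + ᾱ_N Q(N)`. -/
noncomputable def etaN (A₀ αd αr αs AM κr q : ℝ) (M : ℕ) (Q : ℕ → ℝ) (N : ℕ) : ℝ :=
  αd * AM / M + alphaBarN A₀ αr αs κr q N * Q N

/-- `ω(N) = 2 κ_r ᾱ_N N² + ᾱ_N Q(N)`. -/
noncomputable def omegaN (A₀ αr αs κr q : ℝ) (Q : ℕ → ℝ) (N : ℕ) : ℝ :=
  2 * κr * alphaBarN A₀ αr αs κr q N * (N : ℝ) ^ 2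
    + alphaBarN A₀ αr αs κr q N * Q N

/-- Asymptotic standard deviation of the capacity:
`σ_C(N) = (ρ M log₂ e / (1 + ρ M μ(N))) √(ω(N) η(N) + η(N) + ((M-1)/M) α_d A_M)`. -/
noncomputable def sigmaCap (A₀ αd αr αs AM ρ κr q : ℝ) (M : ℕ) (Q : ℕ → ℝ) (N : ℕ) : ℝ :=
  ρ * M * Real.logb 2 (Real.exp 1) / (1 + ρ * M * muN A₀ αd αr αs AM κr q Q N) *
    Real.sqrt (omegaN A₀ αr αs κr q Q N * etaN A₀ αd αr αs AM κr q M Q N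
      + etaN A₀ αd αr αs AM κr q M Q N + ((M : ℝ) - 1) / M * (αd * AM))

/-- Asymptotic mean of the capacity: `μ_C(N) = log₂(1 + ρ M μ(N))`. -/
noncomputable def muCap (A₀ αd αr αs AM ρ κr q : ℝ) (M : ℕ) (Q : ℕ → ℝ) (N : ℕ) : ℝ :=
  Real.logb 2 (1 + ρ * M * muN A₀ αd αr αs AM κr q Q N)

open Asymptotics Topology

open scoped MatrixOrder in
theorem Matrix.IsHermitian.star_dotProduct_mulVec_le {𝕜 n : Type*} [RCLike 𝕜] [Fintype n]
    [DecidableEq n] {A : Matrix n n 𝕜} (hA : A.IsHermitian) {c : ℝ}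
    (hc : ∀ i, hA.eigenvalues i ≤ c) (v : n → 𝕜) :
    star v ⬝ᵥ A *ᵥ v ≤ (c : 𝕜) * (star v ⬝ᵥ v) := by
  have hle : A ≤ algebraMap ℝ _ c := by
    rw [le_algebraMap_iff_spectrum_le hA.isSelfAdjoint, hA.spectrum_real_eq_range_eigenvalues]
    rintro _ ⟨i, rfl⟩
    exact hc i
  have := (Matrix.le_iff.mp hle).dotProduct_mulVec_nonneg v
  rw [Algebra.algebraMap_eq_smul_one, sub_mulVec, dotProduct_sub, smul_mulVec, one_mulVec,
    dotProduct_smul, sub_nonneg] at this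
  simpa [RCLike.real_smul_eq_coe_mul] using this

theorem star_dotProduct_self_of_norm_eq_one {𝕜 n : Type*} [RCLike 𝕜] [Fintype n] {v : n → 𝕜}
    (hv : ∀ i, ‖v i‖ = 1) : star v ⬝ᵥ v = Fintype.card n := by
  simp [dotProduct, RCLike.conj_mul, hv]

theorem tendsto_mul_add_add_div_sq_nhds_zero {α : Type*} {l : Filter α}
    {D f g : α → ℝ} (hD : Tendsto D l atTop) (hf : f =O[l] D) (hg : g =o[l] D) (c : ℝ) :
    Tendsto (fun x => (f x * g x + g x + c) / D x ^ 2) l (𝓝 0) := by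
  have h1 : (fun _ => (1 : ℝ)) =o[l] D :=
    (isLittleO_one_left_iff ℝ).2 (tendsto_norm_atTop_atTop.comp hD)
  have := ((hf.mul_isLittleO hg).add (hg.mul h1)).add ((h1.mul h1).const_mul_left c)
  simpa [sq] using this.tendsto_div_nhds_zero

theorem isBigO_one_add_const_mul_self {α : Type*} {l : Filter α} {f : α → ℝ} {b : ℝ}
    (hb : 0 < b) (hf : ∀ᶠ x in l, 0 ≤ f x) : f =O[l] fun x => 1 + b * f x := by
  refine IsBigO.of_bound b⁻¹ ?_
  filter_upwards [hf] with x hx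
  rw [norm_of_nonneg hx, norm_of_nonneg (by positivity), inv_mul_eq_div, le_div_iff₀ hb]
  linarith

section

variable {A₀ αd αr αs AM κr q : ℝ} {Q : ℕ → ℝ}

theorem alphaBarN_nonneg (hαr : 0 ≤ αr) (hαs : 0 ≤ αs) (hκr : 0 ≤ κr) (N : ℕ) :
    0 ≤ alphaBarN A₀ αr αs κr q N := by
  unfold alphaBarN
  positivity

theorem alphaBarN_mul_sq {N : ℕ} (hN : N ≠ 0) :
    alphaBarN A₀ αr αs κr q N * N ^ 2 = αr * αs / (1 + κr) * (A₀ * (N : ℝ) ^ (1 - q)) ^ 2 := by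
  have hN' : (N : ℝ) ≠ 0 := Nat.cast_ne_zero.2 hN
  rw [sub_eq_neg_add, rpow_add_one hN', alphaBarN, irsElemArea]
  ring

theorem tendsto_alphaBarN_mul_sq_atTop (hA₀ : 0 < A₀) (hαr : 0 < αr) (hαs : 0 < αs)
    (hκr : 0 ≤ κr) (hq : q < 1) :
    Tendsto (fun N : ℕ => alphaBarN A₀ αr αs κr q N * N ^ 2) atTop atTop := by
  have hpow : Tendsto (fun N : ℕ => A₀ * (N : ℝ) ^ (1 - q)) atTop atTop :=
    ((tendsto_rpow_atTop (sub_pos.2 hq)).comp tendsto_natCast_atTop_atTop).const_mul_atTop hA₀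
  refine (((tendsto_pow_atTop two_ne_zero).comp hpow).const_mul_atTop
    (by positivity : 0 < αr * αs / (1 + κr))).congr' ?_
  filter_upwards [eventually_ne_atTop 0] with N hN
  exact (alphaBarN_mul_sq hN).symm

theorem mul_alphaBarN_mul_sq_le_muN (hd : 0 ≤ αd * AM)
    {N : ℕ} (hQ : 0 ≤ alphaBarN A₀ αr αs κr q N * Q N) :
    κr * alphaBarN A₀ αr αs κr q N * N ^ 2 ≤ muN A₀ αd αr αs AM κr q Q N := by
  unfold muN
  linarith

theorem omegaN_nonneg (hκr : 0 ≤ κr) {N : ℕ} (hb : 0 ≤ alphaBarN A₀ αr αs κr q N)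
    (hQ : 0 ≤ Q N) : 0 ≤ omegaN A₀ αr αs κr q Q N := by
  unfold omegaN
  have := mul_nonneg hb hQ
  positivity

theorem etaN_nonneg (hd : 0 ≤ αd * AM) {M N : ℕ} (hQ : 0 ≤ alphaBarN A₀ αr αs κr q N * Q N) :
    0 ≤ etaN A₀ αd αr αs AM κr q M Q N := by
  unfold etaN
  positivity

theorem omegaN_le_two_mul_muN (hd : 0 ≤ αd * AM)
    {N : ℕ} (hQ : 0 ≤ alphaBarN A₀ αr αs κr q N * Q N) :
    omegaN A₀ αr αs κr q Q N ≤ 2 * muN A₀ αd αr αs AM κr q Q N := by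
  unfold omegaN muN
  linarith

theorem alphaBarN_mul_le_muN (hd : 0 ≤ αd * AM) (hκr : 0 < κr) {a u : ℝ} (ha : 0 ≤ a)
    {N : ℕ} (hN : N ≠ 0) (hb : 0 ≤ alphaBarN A₀ αr αs κr q N) (hQ : 0 ≤ Q N)
    (hQle : Q N ≤ a * (N : ℝ) ^ u * N) :
    alphaBarN A₀ αr αs κr q N * Q N ≤ a / κr * (N : ℝ) ^ (u - 1) * muN A₀ αd αr αs AM κr q Q N :=
  calc alphaBarN A₀ αr αs κr q N * Q N
      ≤ alphaBarN A₀ αr αs κr q N * (a * (N : ℝ) ^ u * N) := mul_le_mul_of_nonneg_left hQle hb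
    _ = a / κr * (N : ℝ) ^ (u - 1) * (κr * alphaBarN A₀ αr αs κr q N * N ^ 2) := by
      rw [rpow_sub_one (Nat.cast_ne_zero.2 hN)]
      field_simp
    _ ≤ a / κr * (N : ℝ) ^ (u - 1) * muN A₀ αd αr αs AM κr q Q N :=
      mul_le_mul_of_nonneg_left (mul_alphaBarN_mul_sq_le_muN hd (mul_nonneg hb hQ))
        (by positivity)

theorem tendsto_muN_atTop (hA₀ : 0 < A₀) (hd : 0 ≤ αd * AM) (hαr : 0 < αr) (hαs : 0 < αs)
    (hκr : 0 < κr) (hq : q < 1) (hQ : ∀ N, 0 ≤ Q N) :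
    Tendsto (muN A₀ αd αr αs AM κr q Q) atTop atTop := by
  refine tendsto_atTop_mono (fun N => mul_alphaBarN_mul_sq_le_muN hd
    (mul_nonneg (alphaBarN_nonneg hαr.le hαs.le hκr.le N) (hQ N))) ?_
  simpa only [mul_assoc] using
    (tendsto_alphaBarN_mul_sq_atTop hA₀ hαr hαs hκr.le hq).const_mul_atTop hκr

theorem omegaN_isBigO_muN (hd : 0 ≤ αd * AM) (hαr : 0 ≤ αr) (hαs : 0 ≤ αs) (hκr : 0 ≤ κr)
    (hQ : ∀ N, 0 ≤ Q N) :
    omegaN A₀ αr αs κr q Q =O[atTop] muN A₀ αd αr αs AM κr q Q := by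
  refine IsBigO.of_bound 2 (Eventually.of_forall fun N => ?_)
  have hb := alphaBarN_nonneg (A₀ := A₀) (q := q) hαr hαs hκr N
  have hω := omegaN_nonneg hκr hb (hQ N)
  have hωμ := omegaN_le_two_mul_muN hd (mul_nonneg hb (hQ N))
  rw [norm_of_nonneg hω, norm_of_nonneg (by linarith)]
  exact hωμ

theorem etaN_isLittleO_muN (hA₀ : 0 < A₀) (hd : 0 ≤ αd * AM) (hαr : 0 < αr) (hαs : 0 < αs)
    (hκr : 0 < κr) (hq : q < 1) (M : ℕ) {a u : ℝ} (ha : 0 ≤ a) (hu : u < 1)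
    (hQ : ∀ N, 0 ≤ Q N) (hQle : ∀ N : ℕ, Q N ≤ a * (N : ℝ) ^ u * N) :
    etaN A₀ αd αr αs AM κr q M Q =o[atTop] muN A₀ αd αr αs AM κr q Q := by
  have hμ := tendsto_muN_atTop hA₀ hd hαr hαs hκr hq hQ
  have hb := alphaBarN_nonneg (A₀ := A₀) (q := q) hαr.le hαs.le hκr.le
  have hconst : (fun _ : ℕ => αd * AM / M) =o[atTop] muN A₀ αd αr αs AM κr q Q :=
    isLittleO_const_left.2 (Or.inr (tendsto_norm_atTop_atTop.comp hμ))
  have hpow : (fun N : ℕ => (N : ℝ) ^ (u - 1)) =o[atTop] fun _ => (1 : ℝ) := by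
    refine (isLittleO_one_iff ℝ).2 ?_
    simpa only [neg_sub, Function.comp_def] using
      (tendsto_rpow_neg_atTop (sub_pos.2 hu)).comp tendsto_natCast_atTop_atTop
  have hrest : (fun N => alphaBarN A₀ αr αs κr q N * Q N)
      =O[atTop] fun N : ℕ => (N : ℝ) ^ (u - 1) * muN A₀ αd αr αs AM κr q Q N := by
    refine IsBigO.of_bound (a / κr) ?_
    filter_upwards [eventually_ne_atTop 0, hμ.eventually_ge_atTop 0] with N hN hμN
    rw [norm_of_nonneg (mul_nonneg (hb N) (hQ N)), norm_of_nonneg (by positivity), ← mul_assoc]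
    exact alphaBarN_mul_le_muN hd hκr ha hN (hb N) (hQ N) (hQle N)
  exact hconst.add (hrest.trans_isLittleO (by simpa using hpow.mul_isBigO (isBigO_refl _ _)))

theorem sigmaCap_sq {ρ : ℝ} {M N : ℕ} (hd : 0 ≤ αd * AM) (hM : 1 ≤ M)
    (hω : 0 ≤ omegaN A₀ αr αs κr q Q N) (hη : 0 ≤ etaN A₀ αd αr αs AM κr q M Q N) :
    sigmaCap A₀ αd αr αs AM ρ κr q M Q N ^ 2 = (ρ * M * logb 2 (exp 1)) ^ 2 *
      ((omegaN A₀ αr αs κr q Q N * etaN A₀ αd αr αs AM κr q M Q N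
        + etaN A₀ αd αr αs AM κr q M Q N + ((M : ℝ) - 1) / M * (αd * AM))
        / (1 + ρ * M * muN A₀ αd αr αs AM κr q Q N) ^ 2) := by
  have hM' : (0 : ℝ) ≤ ((M : ℝ) - 1) / M :=
    div_nonneg (sub_nonneg.2 (Nat.one_le_cast.2 hM)) M.cast_nonneg
  rw [sigmaCap, mul_pow, div_pow, sq_sqrt (by positivity)]
  ring

end

theorem corollary_one_combined_general
    (A₀ αd αr αs AM ρ κr : ℝ) (hA₀ : 0 < A₀) (hαd : 0 < αd) (hαr : 0 < αr)
    (hαs : 0 < αs) (hAM : 0 < AM) (hρ : 0 < ρ) (hκr : 0 < κr)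
    (M : ℕ) (hM : 1 ≤ M) (q u : ℝ)
    (hqu : q < u) (hu1 : u < 1)
    (R : ∀ N : ℕ, Matrix (Fin N) (Fin N) ℂ)
    (hPSD : ∀ N : ℕ, (R N).PosSemidef)
    (a : ℝ) (ha : 0 < a)
    (hEig : ∀ (N : ℕ) (i : Fin N), (hPSD N).isHermitian.eigenvalues i ≤ a * (N : ℝ) ^ u)
    (v : ∀ N : ℕ, Fin N → ℂ) (hv : ∀ (N : ℕ) (n : Fin N), ‖v N n‖ = 1)
    (Q : ℕ → ℝ) (hQ : ∀ N : ℕ, Q N = (star (v N) ⬝ᵥ (R N) *ᵥ (v N)).re) :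
    Tendsto (muCap A₀ αd αr αs AM ρ κr q M Q) atTop atTop ∧
      Tendsto (fun N : ℕ => (sigmaCap A₀ αd αr αs AM ρ κr q M Q N) ^ 2)
        atTop (nhds 0) := by
  have hQ0 (N : ℕ) : 0 ≤ Q N := by
    simpa [hQ N] using (Complex.le_def.1 ((hPSD N).dotProduct_mulVec_nonneg (v N))).1
  have hQle (N : ℕ) : Q N ≤ a * (N : ℝ) ^ u * N := by
    have h := (hPSD N).isHermitian.star_dotProduct_mulVec_le (hEig N) (v N)
    rw [star_dotProduct_self_of_norm_eq_one (hv N)] at h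
    simpa [hQ N] using (Complex.le_def.1 h).1
  have hd : 0 ≤ αd * AM := by positivity
  have hρM : 0 < ρ * M := by positivity
  have hq : q < 1 := hqu.trans hu1
  have hμ := tendsto_muN_atTop hA₀ hd hαr hαs hκr hq hQ0
  have hD := tendsto_atTop_add_const_left _ 1 (hμ.const_mul_atTop hρM)
  refine ⟨(tendsto_logb_atTop one_lt_two).comp hD, ?_⟩
  have hμD := isBigO_one_add_const_mul_self hρM (hμ.eventually_ge_atTop 0)
  have hlim := (tendsto_mul_add_add_div_sq_nhds_zero hD
    ((omegaN_isBigO_muN hd hαr.le hαs.le hκr.le hQ0).trans hμD)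
    ((etaN_isLittleO_muN hA₀ hd hαr hαs hκr hq M ha.le hu1 hQ0 hQle).trans_isBigO hμD)
    (((M : ℝ) - 1) / M * (αd * AM))).const_mul ((ρ * M * logb 2 (exp 1)) ^ 2)
  rw [mul_zero] at hlim
  have hb := alphaBarN_nonneg (A₀ := A₀) (q := q) hαr.le hαs.le hκr.le
  exact hlim.congr fun N => (sigmaCap_sq hd hM (omegaN_nonneg hκr.le (hb N) (hQ0 N))
    (etaN_nonneg hd (mul_nonneg (hb N) (hQ0 N)))).symm

/-- Corollary 1 (combined, explicit form): with `0 ≤ q ≤ 1`, `q < u < 1`, Hermitian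
PSD correlation matrices `R_N` whose largest eigenvalue is at most `a N^u`, and
unit-modulus LoS vectors `v_N`, setting `Q(N) = v_N^H R_N v_N` gives
`μ_C(N) → +∞` and `σ_C(N)² → 0` as `N → ∞`. -/
theorem corollary_one_combined
    (A₀ αd αr αs AM ρ κr : ℝ) (hA₀ : 0 < A₀) (hαd : 0 < αd) (hαr : 0 < αr)
    (hαs : 0 < αs) (hAM : 0 < AM) (hρ : 0 < ρ) (hκr : 0 < κr)
    (M : ℕ) (hM : 1 ≤ M) (q u : ℝ) (hq0 : 0 ≤ q) (hq1 : q ≤ 1)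
    (hqu : q < u) (hu1 : u < 1)
    (R : ∀ N : ℕ, Matrix (Fin N) (Fin N) ℂ)
    (hPSD : ∀ N : ℕ, (R N).PosSemidef)
    (a : ℝ) (ha : 0 < a)
    (hEig : ∀ (N : ℕ) (i : Fin N), (hPSD N).isHermitian.eigenvalues i ≤ a * (N : ℝ) ^ u)
    (v : ∀ N : ℕ, Fin N → ℂ) (hv : ∀ (N : ℕ) (n : Fin N), ‖v N n‖ = 1)
    (Q : ℕ → ℝ) (hQ : ∀ N : ℕ, Q N = (star (v N) ⬝ᵥ (R N) *ᵥ (v N)).re) :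
    Tendsto (muCap A₀ αd αr αs AM ρ κr q M Q) atTop atTop ∧
      Tendsto (fun N : ℕ => (sigmaCap A₀ αd αr αs AM ρ κr q M Q N) ^ 2)
        atTop (nhds 0) :=
  corollary_one_combined_general A₀ αd αr αs AM ρ κr hA₀ hαd hαr hαs hAM hρ hκr M hM q u hqu hu1 R
    hPSD a ha hEig v hv Q hQ
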